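/- Let 3 ≤ n < k+3, w = ⌈(k+1)/(n-2)⌉, ℓ > w, and |i - j| = w, say j = i + w. Then the duals of critical pairs (x^i_α, x^{i+w}_β) ∈ Crit(E_i) and (x^j_γ, x^{j+w}_δ) ∈ Crit(E_j) form a strict alternating cycle if and only if β = γ. -/

import Mathlib

/-- In the generalized crown `S^k_n` (indices in `ZMod (n+k)`), `b_i` is incomparable
with `a_u` iff `u ≡ i + t (mod n+k)` for some `0 ≤ t ≤ k`. -/
def crownMiss (k : ℕ) {N : ℕ} (i u : ZMod N) : Prop :=
  ∃ t : ℕ, t ≤ k ∧ u = i + (t : ZMod N)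

/-- One step of the layered generalized crown `⋊_ℓ S^k_n` on `ℕ × ZMod (n+k)`:
`x^{i+1}_j` covers `x^i_m` exactly when `m` is a "hit" of `j`. -/
def layStep (k : ℕ) {N : ℕ} (x y : ℕ × ZMod N) : Prop :=
  y.1 = x.1 + 1 ∧ ¬ crownMiss k y.2 x.2

/-- The order of the layered generalized crown: reflexive transitive closure. -/
def layLe (k : ℕ) {N : ℕ} : ℕ × ZMod N → ℕ × ZMod N → Prop :=
  Relation.ReflTransGen (layStep k)

/-- The strict order of the layered generalized crown: transitive closure. -/
def layLt (k : ℕ) {N : ℕ} : ℕ × ZMod N → ℕ × ZMod N → Prop :=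
  Relation.TransGen (layStep k)


/-- `{(x₁,y₁),(x₂,y₂)}` is a strict alternating cycle of length 2 for the order `le`. -/
def sac2 {α : Type*} (le : α → α → Prop) (x1 y1 x2 y2 : α) : Prop :=
  (¬ le x1 y1 ∧ ¬ le y1 x1) ∧ (¬ le x2 y2 ∧ ¬ le y2 x2) ∧
    le y1 x2 ∧ le y2 x1 ∧ ¬ le y1 x1 ∧ ¬ le y2 x2

/-!
Every covering step `x^m_a ⋖ x^{m+1}_{a+s}` may advance the index by any `s` with `0 < s < n`, so
after `m` levels the reachable indices `a + S` cover all `S` with `m ≤ S ≤ m (n - 1)`, that is all of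
`ZMod (n + k)` as soon as `n + k - 1 ≤ m (n - 2)`. Since `w (n - 2) ≥ k + 1` and `n ≤ k + 2`, this
holds for `m = 2w`, so `x^i_α ≤ x^{i+2w}_δ` whatever `α, δ`; the other comparability of the cycle
lies within the single level `i + w`, where the order is trivial, and holds iff `β = γ`.
-/

theorem layLe.fst_le {k N : ℕ} {x y : ℕ × ZMod N} (h : layLe k x y) : x.1 ≤ y.1 := by
  induction h with
  | refl => rfl
  | tail _ hstep ih => rw [hstep.1]; omega

theorem layLe.eq_of_fst_eq {k N : ℕ} {x y : ℕ × ZMod N} (h : layLe k x y) (hxy : x.1 = y.1) :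
    x = y := by
  rcases Relation.ReflTransGen.cases_tail h with rfl | ⟨z, hxz, hzy⟩
  · rfl
  · have := layLe.fst_le hxz
    rw [hzy.1] at hxy
    omega

theorem layStep_add_natCast {n k s : ℕ} (hs : 0 < s) (hsn : s < n) (i : ℕ) (a : ZMod (n + k)) :
    layStep k (i, a) (i + 1, a + s) := by
  refine ⟨rfl, ?_⟩
  rintro ⟨t, ht, hat⟩
  have hdvd : n + k ∣ s + t := by
    rw [← ZMod.natCast_eq_zero_iff]
    push_cast
    linear_combination -hat
  have := Nat.le_of_dvd (by omega) hdvd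
  omega

theorem layLe_add_natCast {n k m S : ℕ} (hmS : m ≤ S) (hSm : S ≤ m * (n - 1)) (i : ℕ)
    (a : ZMod (n + k)) : layLe k (i, a) (i + m, a + S) := by
  induction m generalizing S i a with
  | zero =>
    obtain rfl : S = 0 := by omega
    simp only [Nat.cast_zero, add_zero]
    exact .refl
  | succ m ih =>
    rw [Nat.succ_mul] at hSm
    have hn : 0 < n - 1 := Nat.pos_of_ne_zero fun h => by simp only [h, mul_zero] at hSm; omega
    have hmn : m ≤ m * (n - 1) := Nat.le_mul_of_pos_right m hn
    obtain ⟨s, hs⟩ : ∃ s, s = min (n - 1) (S - m) := ⟨_, rfl⟩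
    have hstep := layStep_add_natCast (k := k) (s := s) (by omega) (by omega) i a
    have hrest := ih (S := S - s) (by omega) (by omega) (i + 1) (a + s)
    rw [Nat.cast_sub (by omega), add_add_sub_cancel, add_right_comm] at hrest
    exact .head hstep hrest

theorem layLe_of_le_mul {n k m : ℕ} (hn : 2 ≤ n) (hm : n + k - 1 ≤ m * (n - 2)) (i : ℕ)
    (a b : ZMod (n + k)) : layLe k (i, a) (i + m, b) := by
  have : NeZero (n + k) := ⟨by omega⟩
  have hval := (b - a - m).val_lt
  have hmn : m * (n - 1) = m * (n - 2) + m := by rw [← Nat.mul_succ]; congr 1; omega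
  have h := layLe_add_natCast (m := m) (S := m + (b - a - m).val) (by omega) (by omega) i a
  rwa [Nat.cast_add, ZMod.natCast_zmod_val, add_sub_cancel, add_sub_cancel] at h

theorem layered_w_blocks_general (n k w i j : ℕ) (hn : 3 ≤ n) (hk : n < k + 3)
    (hw : w = (k + n - 2) / (n - 2)) (hj : j = i + w)
    (α β γ δ : ZMod (n + k))
    (hcrit1 : ¬ layLe k (i, α) (i + w, β) ∧ ¬ layLe k (i + w, β) (i, α))
    (hcrit2 : ¬ layLe k (j, γ) (j + w, δ) ∧ ¬ layLe k (j + w, δ) (j, γ)) :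
    sac2 (layLe k) (i + w, β) (i, α) (j + w, δ) (j, γ) ↔ β = γ := by
  subst hj
  have hkw : k + 1 ≤ (n - 2) * w := by
    have h := le_smul_ceilDiv (b := k + 1) (show 0 < n - 2 by omega)
    rwa [smul_eq_mul, Nat.ceilDiv_eq_add_pred_div, show k + 1 + (n - 2) - 1 = k + n - 2 by omega,
      ← hw] at h
  constructor
  · rintro ⟨-, -, -, hγβ, -, -⟩
    exact (congrArg Prod.snd (hγβ.eq_of_fst_eq rfl)).symm
  · rintro rfl
    refine ⟨hcrit1.symm, hcrit2.symm, ?_, .refl, hcrit1.1, hcrit2.1⟩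
    have h2w : (w + w) * (n - 2) = (n - 2) * w + (n - 2) * w := by ring
    have := layLe_of_le_mul (m := w + w) (by omega) (by omega) i α δ
    rwa [← add_assoc] at this

/-- In `⋊_ℓ S^k_n` with `3 ≤ n < k+3`, `w = ⌈(k+1)/(n-2)⌉`, `ℓ > w` and `j = i + w`:
the duals of critical pairs `(x^i_α, x^{i+w}_β) ∈ Crit(E_i)` and
`(x^j_γ, x^{j+w}_δ) ∈ Crit(E_j)` form a strict alternating cycle iff `β = γ`. -/
theorem layered_w_blocks (n k l w i j : ℕ) (hn : 3 ≤ n) (hk : n < k + 3)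
    (hw : w = (k + n - 2) / (n - 2)) (hl : w < l) (hj : j = i + w)
    (hi : 1 ≤ i) (hjw : j + w ≤ l + 1)
    (α β γ δ : ZMod (n + k))
    (hcrit1 : ¬ layLe k (i, α) (i + w, β) ∧ ¬ layLe k (i + w, β) (i, α))
    (hcrit2 : ¬ layLe k (j, γ) (j + w, δ) ∧ ¬ layLe k (j + w, δ) (j, γ)) :
    sac2 (layLe k) (i + w, β) (i, α) (j + w, δ) (j, γ) ↔ β = γ :=
  layered_w_blocks_general n k w i j hn hk hw hj α β γ δ hcrit1 hcrit2
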